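/- (Mehler formula) Let Ω = -ℏ² d²/dx² + x² act on L²(ℝ), ℏ > 0, t > 0. The integral kernel of exp(-tΩ) is P(t,x,y) = (2π ℏ sinh(2tℏ))^{-1/2} exp( -(1/(2ℏ sinh(2tℏ))) ( cosh(2tℏ)(x² + y²) - 2xy ) ). -/

import Mathlib

/-!
Write `τ = 2tℏ`. Both `∂ₓ` and `∂ₜ` of the Mehler kernel `P` are `P` times an explicit rational
function of `x, y` and the hyperbolic functions of `τ`; the heat equation `∂ₜP = ℏ²∂ₓ²P - x²P`
then reduces to `cosh² τ - sinh² τ = 1`. For the initial condition, substituting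
`y = x + √(ℏ sinh τ) z` turns `P(t,x,y) dy` into the standard Gaussian density times
`exp(-tanh(tℏ)(x² + y²)/(2ℏ)) ∈ (0, 1]`, which tends to `1` as `t → 0⁺`; dominated convergence
gives `∫ P(t,x,y) u(y) dy → u(x)`.
-/

open scoped Real Topology

noncomputable section

/-- The Mehler kernel
`P(t,x,y) = (2πℏ sinh(2tℏ))^{-1/2} exp( -(cosh(2tℏ)(x²+y²) - 2xy) / (2ℏ sinh(2tℏ)) )`. -/
def mehlerKernel (ℏ t x y : ℝ) : ℝ :=
  (Real.sqrt (2 * π * ℏ * Real.sinh (2 * t * ℏ)))⁻¹ *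
    Real.exp (-(1 / (2 * ℏ * Real.sinh (2 * t * ℏ))) *
      (Real.cosh (2 * t * ℏ) * (x ^ 2 + y ^ 2) - 2 * x * y))

open Filter MeasureTheory Real ProbabilityTheory

theorem HasDerivAt.inv_sqrt {f : ℝ → ℝ} {f' x : ℝ} (hf : HasDerivAt f f' x) (hx : 0 < f x) :
    HasDerivAt (fun y => (√(f y))⁻¹) (-(f' / (2 * f x)) * (√(f x))⁻¹) x := by
  refine ((hf.sqrt hx.ne').inv (sqrt_ne_zero'.2 hx)).congr_deriv ?_
  have hsqrt := sqrt_pos.2 hx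
  field_simp
  rw [sq_sqrt hx.le]

theorem Real.tanh_nonneg {x : ℝ} (hx : 0 ≤ x) : 0 ≤ tanh x := by
  rw [tanh_eq_sinh_div_cosh]
  exact div_nonneg (sinh_nonneg_iff.2 hx) (cosh_pos x).le

@[fun_prop]
theorem Real.continuous_tanh : Continuous tanh := by
  rw [show tanh = fun x => sinh x / cosh x from funext tanh_eq_sinh_div_cosh]
  exact continuous_sinh.div continuous_cosh fun x => (cosh_pos x).ne'

theorem integral_smul_comp_add_mul {E : Type*} [NormedAddCommGroup E] [NormedSpace ℝ E]
    (f : ℝ → E) (x : ℝ) {σ : ℝ} (hσ : 0 < σ) :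
    ∫ z, σ • f (x + σ * z) = ∫ y, f y := by
  rw [integral_smul, Measure.integral_comp_mul_left (fun w => f (x + w)) σ,
    integral_add_left_eq_self, abs_of_pos (inv_pos.2 hσ), smul_smul, mul_inv_cancel₀ hσ.ne',
    one_smul]

theorem tendsto_integral_mul_comp_add_mul {ι : Type*} {l : Filter ι} [l.IsCountablyGenerated]
    {φ u : ℝ → ℝ} {w : ι → ℝ → ℝ} {σ : ι → ℝ} {M : ℝ} (hφ : Integrable φ) (hu : Continuous u)
    (hM : ∀ y, ‖u y‖ ≤ M) (hw : ∀ i, AEStronglyMeasurable (w i))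
    (hw_le : ∀ᶠ i in l, ∀ z, ‖w i z‖ ≤ 1) (hw_lim : ∀ z, Tendsto (fun i => w i z) l (𝓝 1))
    (hσ : Tendsto σ l (𝓝 0)) (x : ℝ) :
    Tendsto (fun i => ∫ z, φ z * w i z * u (x + σ i * z)) l (𝓝 ((∫ z, φ z) * u x)) := by
  rw [← integral_mul_const]
  refine tendsto_integral_filter_of_dominated_convergence (fun z => ‖φ z‖ * M)
    (Eventually.of_forall fun i => (hφ.aestronglyMeasurable.mul (hw i)).mul
      (hu.comp (by fun_prop)).aestronglyMeasurable) ?_ (hφ.norm.mul_const M) ?_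
  · filter_upwards [hw_le] with i hi
    refine Eventually.of_forall fun z => ?_
    rw [norm_mul, norm_mul]
    calc ‖φ z‖ * ‖w i z‖ * ‖u (x + σ i * z)‖ ≤ ‖φ z‖ * 1 * M := by gcongr; exacts [hi z, hM _]
      _ = ‖φ z‖ * M := by ring
  · refine Eventually.of_forall fun z => ?_
    have hshift : Tendsto (fun i => x + σ i * z) l (𝓝 x) := by
      simpa using tendsto_const_nhds.add (hσ.mul_const z)
    simpa using (tendsto_const_nhds.mul (hw_lim z)).mul ((hu.tendsto x).comp hshift)

section

variable {ℏ : ℝ}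

theorem hasDerivAt_mehlerKernel_space (t x y : ℝ) :
    HasDerivAt (fun x' => mehlerKernel ℏ t x' y)
      (-((cosh (2 * t * ℏ) * x - y) / (ℏ * sinh (2 * t * ℏ))) * mehlerKernel ℏ t x y) x := by
  have hQ := (((hasDerivAt_pow 2 x).add_const (y ^ 2)).const_mul (cosh (2 * t * ℏ))).sub
    (((hasDerivAt_id x).const_mul 2).mul_const y)
  refine (((hQ.const_mul (-(1 / (2 * ℏ * sinh (2 * t * ℏ))))).exp).const_mul
    (√(2 * π * ℏ * sinh (2 * t * ℏ)))⁻¹).congr_deriv ?_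
  simp only [mehlerKernel, Pi.sub_apply, id]
  ring

theorem deriv_deriv_mehlerKernel_space (t x y : ℝ) :
    deriv (fun x' => deriv (fun x'' => mehlerKernel ℏ t x'' y) x') x =
      (((cosh (2 * t * ℏ) * x - y) / (ℏ * sinh (2 * t * ℏ))) ^ 2
        - cosh (2 * t * ℏ) / (ℏ * sinh (2 * t * ℏ))) * mehlerKernel ℏ t x y := by
  simp only [fun x' => (hasDerivAt_mehlerKernel_space (ℏ := ℏ) t x' y).deriv]
  have hL := ((((hasDerivAt_id x).const_mul (cosh (2 * t * ℏ))).sub_const y).div_const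
    (ℏ * sinh (2 * t * ℏ))).neg
  refine ((hL.mul (hasDerivAt_mehlerKernel_space t x y)).deriv).trans ?_
  simp only [Pi.neg_apply, id]
  ring

theorem hasDerivAt_mehlerKernel_time {t : ℝ} (hℏ : 0 < ℏ) (ht : 0 < t) (x y : ℝ) :
    HasDerivAt (fun s => mehlerKernel ℏ s x y)
      (((x ^ 2 + y ^ 2 - 2 * cosh (2 * t * ℏ) * x * y) / sinh (2 * t * ℏ) ^ 2
        - ℏ * cosh (2 * t * ℏ) / sinh (2 * t * ℏ)) * mehlerKernel ℏ t x y) t := by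
  have hs : 0 < sinh (2 * t * ℏ) := sinh_pos_iff.2 (by positivity)
  have hτ : HasDerivAt (fun s => 2 * s * ℏ) (2 * ℏ) t := by
    simpa using ((hasDerivAt_id t).const_mul 2).mul_const ℏ
  have hsinh := (hasDerivAt_sinh _).comp t hτ
  have hcosh := (hasDerivAt_cosh _).comp t hτ
  have hA := (hsinh.const_mul (2 * π * ℏ)).inv_sqrt (by positivity)
  have hE := ((hasDerivAt_const t (1 : ℝ)).div (hsinh.const_mul (2 * ℏ))
    (by positivity)).neg.mul ((hcosh.mul_const (x ^ 2 + y ^ 2)).sub_const (2 * x * y))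
  refine (hA.mul hE.exp).congr_deriv ?_
  simp only [mehlerKernel, Function.comp_def, Pi.mul_apply, Pi.neg_apply, Pi.div_apply]
  set τ := 2 * t * ℏ
  field_simp
  linear_combination 2 * ℏ * (x ^ 2 + y ^ 2) * cosh_sq τ

theorem mehlerKernel_heat_equation {t : ℝ} (hℏ : 0 < ℏ) (ht : 0 < t) (x y : ℝ) :
    HasDerivAt (fun s => mehlerKernel ℏ s x y)
      (ℏ ^ 2 * deriv (fun x' => deriv (fun x'' => mehlerKernel ℏ t x'' y) x') x
        - x ^ 2 * mehlerKernel ℏ t x y) t := by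
  have hs : sinh (2 * t * ℏ) ≠ 0 := (sinh_pos_iff.2 (by positivity)).ne'
  rw [deriv_deriv_mehlerKernel_space]
  refine (hasDerivAt_mehlerKernel_time hℏ ht x y).congr_deriv ?_
  field_simp
  linear_combination -(x ^ 2 * mehlerKernel ℏ t x y) * cosh_sq (2 * t * ℏ)

theorem mehlerKernel_rescaled {t : ℝ} (hℏ : 0 < ℏ) (ht : 0 < t) (x z : ℝ) :
    √(ℏ * sinh (2 * t * ℏ)) * mehlerKernel ℏ t x (x + √(ℏ * sinh (2 * t * ℏ)) * z) =
      gaussianPDFReal 0 1 z *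
        exp (-(tanh (t * ℏ) / (2 * ℏ)) * (x ^ 2 + (x + √(ℏ * sinh (2 * t * ℏ)) * z) ^ 2)) := by
  have hs : 0 < sinh (2 * t * ℏ) := sinh_pos_iff.2 (by positivity)
  have hsplit : √(2 * π * ℏ * sinh (2 * t * ℏ)) = √(2 * π) * √(ℏ * sinh (2 * t * ℏ)) := by
    rw [← sqrt_mul (by positivity), mul_assoc (2 * π), mul_assoc]
  have hσ : √(ℏ * sinh (2 * t * ℏ)) ^ 2 = ℏ * sinh (2 * t * ℏ) := sq_sqrt (by positivity)
  have hσ0 : 0 < √(ℏ * sinh (2 * t * ℏ)) := sqrt_pos.2 (by positivity)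
  set σ := √(ℏ * sinh (2 * t * ℏ))
  have hexp : -(1 / (2 * ℏ * sinh (2 * t * ℏ))) *
        (cosh (2 * t * ℏ) * (x ^ 2 + (x + σ * z) ^ 2) - 2 * x * (x + σ * z)) =
      -z ^ 2 / 2 + -(tanh (t * ℏ) / (2 * ℏ)) * (x ^ 2 + (x + σ * z) ^ 2) := by
    rw [show 2 * t * ℏ = 2 * (t * ℏ) by ring] at hσ ⊢
    set a := t * ℏ
    have hsh : 0 < sinh a := sinh_pos_iff.2 (by positivity)
    have hch : 0 < cosh a := cosh_pos a
    rw [sinh_two_mul] at hσ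
    rw [cosh_two_mul, sinh_two_mul, tanh_eq_sinh_div_cosh]
    field_simp
    linear_combination (-(x ^ 2 + (x + σ * z) ^ 2)) * cosh_sq a - z ^ 2 * hσ
  simp only [gaussianPDFReal, NNReal.coe_one, mul_one, sub_zero]
  rw [mehlerKernel, hsplit, hexp, exp_add]
  field_simp

theorem tendsto_integral_mehlerKernel_mul (hℏ : 0 < ℏ) {u : ℝ → ℝ} (hu : Continuous u)
    (hcs : HasCompactSupport u) (x : ℝ) :
    Tendsto (fun t => ∫ y, mehlerKernel ℏ t x y * u y) (𝓝[>] 0) (𝓝 (u x)) := by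
  obtain ⟨M, hM⟩ := hcs.exists_bound_of_continuous hu
  set σ : ℝ → ℝ := fun t => √(ℏ * sinh (2 * t * ℏ))
  set w : ℝ → ℝ → ℝ := fun t z => exp (-(tanh (t * ℏ) / (2 * ℏ)) * (x ^ 2 + (x + σ t * z) ^ 2))
  have hrescale : ∀ t > 0, ∫ y, mehlerKernel ℏ t x y * u y =
      ∫ z, gaussianPDFReal 0 1 z * w t z * u (x + σ t * z) := by
    intro t ht
    rw [← integral_smul_comp_add_mul _ x (sqrt_pos.2 (by positivity) : 0 < σ t)]
    simp only [smul_eq_mul, ← mul_assoc, σ, mehlerKernel_rescaled hℏ ht, w]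
  have hσ : Continuous σ := by fun_prop
  have hw : ∀ z, Continuous fun t => w t z := fun z => by fun_prop
  have hw_le : ∀ᶠ t in 𝓝[>] 0, ∀ z, ‖w t z‖ ≤ 1 := by
    filter_upwards [self_mem_nhdsWithin] with t ht z
    rw [norm_of_nonneg (exp_nonneg _), exp_le_one_iff]
    have htanh : 0 ≤ tanh (t * ℏ) := tanh_nonneg (mul_pos ht hℏ).le
    exact mul_nonpos_of_nonpos_of_nonneg (neg_nonpos.2 (by positivity)) (by positivity)
  have key := tendsto_integral_mul_comp_add_mul (integrable_gaussianPDFReal 0 1) hu hM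
    (fun t => (by fun_prop : Continuous (w t)).aestronglyMeasurable) hw_le
    (fun z => by simpa [w, σ] using ((hw z).tendsto 0).mono_left nhdsWithin_le_nhds)
    (by simpa [σ] using (hσ.tendsto 0).mono_left nhdsWithin_le_nhds) x
  rw [integral_gaussianPDFReal_eq_one 0 one_ne_zero, one_mul] at key
  exact key.congr' (eventually_nhdsWithin_of_forall fun t ht => (hrescale t ht).symm)

end

/-- **Mehler formula.** The Mehler kernel is the heat kernel of the harmonic
oscillator `Ω = -ℏ² d²/dx² + x²`: it satisfies `∂ₜP = -( -ℏ² ∂ₓ² + x² ) P` for `t > 0`, and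
`P(t,·,·) → δ` as `t → 0⁺` (i.e. `∫ P(t,x,y) u(y) dy → u(x)` for continuous compactly
supported `u`); equivalently, `exp(-tΩ)` has integral kernel `P(t,x,y)`. -/
theorem mehlerKernel_is_harmonic_oscillator_heat_kernel (ℏ : ℝ) (hℏ : 0 < ℏ) :
    (∀ t : ℝ, 0 < t → ∀ x y : ℝ,
      HasDerivAt (fun s => mehlerKernel ℏ s x y)
        (ℏ ^ 2 * deriv (fun x' => deriv (fun x'' => mehlerKernel ℏ t x'' y) x') x
          - x ^ 2 * mehlerKernel ℏ t x y) t) ∧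
    (∀ u : ℝ → ℝ, Continuous u → HasCompactSupport u → ∀ x : ℝ,
      Filter.Tendsto (fun t => ∫ y : ℝ, mehlerKernel ℏ t x y * u y)
        (𝓝[>] 0) (𝓝 (u x))) :=
  ⟨fun _ ht x y => mehlerKernel_heat_equation hℏ ht x y,
    fun _ hu hcs x => tendsto_integral_mehlerKernel_mul hℏ hu hcs x⟩
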